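/- Let Σ ∈ ℝ^{p×p} be positive definite with Ω = Σ^{−1}, b ∈ ℝ^p, σ > 0, and n, ñ positive integers. Define η_j^{(os)} = √n·b_j / √(Ω_{jj}·σ²) and η_j^{(ts)} = √n·b_j / √( (Ω_{jj}·bᵀΣb + b_j²)·(1 + n/ñ) + Ω_{jj}·σ² ). Then |η_j^{(ts)}| ≤ |η_j^{(os)}|, with strict inequality when b_j ≠ 0. Consequently, for every τ ≥ 0, the two-sample power Φ(|η_j^{(ts)}| − τ) + Φ(−|η_j^{(ts)}| − τ) is at most the one-sample power Φ(|η_j^{(os)}| − τ) + Φ(−|η_j^{(os)}| − τ), with strict inequality when b_j ≠ 0 and τ > 0. -/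

import Mathlib

/-!
The two-sample variance exceeds the one-sample one `Ω_jj σ²` by `(Ω_jj bᵀΣb + b_j²)(1 + n/ñ) ≥ 0`,
strictly when `b_j ≠ 0`, so `|η^(ts)| ≤ |η^(os)|`. The power `Φ(|η| - τ) + Φ(-|η| - τ)` is
nondecreasing in `|η|`: its increment is `∫ φ(t) - φ(t + 2τ)` over `[|η| - τ, |η'| - τ]`, and
the integrand is nonnegative there since `|t| ≤ |t + 2τ|` for `t ≥ -τ`.
-/

open MeasureTheory ProbabilityTheory Filter Matrix Real Topology
open scoped ENNReal NNReal

noncomputable section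

namespace ProxyData

def l0 {p : ℕ} (v : Fin p → ℝ) : ℕ := (Function.support v).ncard

def l1 {p : ℕ} (v : Fin p → ℝ) : ℝ := ∑ i, |v i|

def l2sq {p : ℕ} (v : Fin p → ℝ) : ℝ := ∑ i, (v i) ^ 2

def linf {p : ℕ} (v : Fin p → ℝ) : ℝ := ⨆ i, |v i|

def gaussianVec {p : ℕ} (S : Matrix (Fin p) (Fin p) ℝ) (hS : S.PosSemidef) :
    Measure (Fin p → ℝ) :=
  (Measure.pi fun _ : Fin p => gaussianReal 0 1).map fun z =>
    ((hS.1.eigenvectorUnitary : Matrix (Fin p) (Fin p) ℝ) *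
      diagonal ((↑) ∘ Real.sqrt ∘ hS.1.eigenvalues) *
      (star hS.1.eigenvectorUnitary : Matrix (Fin p) (Fin p) ℝ)) *ᵥ z

def EigBounds {p : ℕ} (S : Matrix (Fin p) (Fin p) ℝ) (C₁ : ℝ) : Prop :=
  S.IsSymm ∧ ∀ v : Fin p → ℝ, C₁⁻¹ * l2sq v ≤ v ⬝ᵥ S *ᵥ v ∧ v ⬝ᵥ S *ᵥ v ≤ C₁ * l2sq v

def SubGaussianLaw (ν : Measure ℝ) (K : ℝ) : Prop :=
  ∀ l : ℕ, 1 ≤ l → (∫ x, |x| ^ l ∂ν) ^ ((l : ℝ)⁻¹) ≤ K * Real.sqrt l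

def NoiseLaw (ν : Measure ℝ) (σ K : ℝ) : Prop :=
  IsProbabilityMeasure ν ∧ Integrable (fun x => x) ν ∧ Integrable (fun x => x ^ 2) ν ∧
    (∫ x, x ∂ν) = 0 ∧ (∫ x, x ^ 2 ∂ν) = σ ^ 2 ∧ SubGaussianLaw ν K

abbrev SampleSpace (p n m : ℕ) :=
  (Fin n → Fin p → ℝ) × (Fin n → ℝ) × (Fin m → Fin p → ℝ)

def modelMeasure {p : ℕ} (n m : ℕ) (S : Matrix (Fin p) (Fin p) ℝ) (hS : S.PosSemidef)
    (ν : Measure ℝ) : Measure (SampleSpace p n m) :=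
  (Measure.pi fun _ : Fin n => gaussianVec S hS).prod
    ((Measure.pi fun _ : Fin n => ν).prod (Measure.pi fun _ : Fin m => gaussianVec S hS))

def yVal {p n m : ℕ} (β : Fin p → ℝ) (ω : SampleSpace p n m) (i : Fin n) : ℝ :=
  (∑ j, ω.1 i j * β j) + ω.2.1 i

def Shat {p n m : ℕ} (β : Fin p → ℝ) (ω : SampleSpace p n m) : Fin p → ℝ :=
  fun j => (∑ i, ω.1 i j * yVal β ω i) / n

def SigTilde {p n m : ℕ} (ω : SampleSpace p n m) : Matrix (Fin p) (Fin p) ℝ :=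
  fun j k => (∑ i, ω.2.2 i j * ω.2.2 i k) / m

def gammaNN {p : ℕ} (S : Matrix (Fin p) (Fin p) ℝ) (β : Fin p → ℝ) (σ : ℝ) (n m : ℕ) : ℝ :=
  σ ^ 2 + (β ⬝ᵥ S *ᵥ β) * ((n : ℝ) / m + 1)

def lassoObj {p : ℕ} (A : Matrix (Fin p) (Fin p) ℝ) (s : Fin p → ℝ) (lam : ℝ)
    (b : Fin p → ℝ) : ℝ :=
  (1 / 2) * (b ⬝ᵥ A *ᵥ b) - b ⬝ᵥ s + lam * l1 b

def IsLassoSol {p : ℕ} (A : Matrix (Fin p) (Fin p) ℝ) (s : Fin p → ℝ) (lam : ℝ)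
    (bhat : Fin p → ℝ) : Prop :=
  ∀ b, lassoObj A s lam bhat ≤ lassoObj A s lam b

def DantzigFeas {p : ℕ} (A : Matrix (Fin p) (Fin p) ℝ) (t : Fin p → ℝ) (lam : ℝ)
    (w : Fin p → ℝ) : Prop :=
  linf (fun i => (A *ᵥ w) i - t i) ≤ lam

def IsDantzigSol {p : ℕ} (A : Matrix (Fin p) (Fin p) ℝ) (t : Fin p → ℝ) (lam : ℝ)
    (w : Fin p → ℝ) : Prop :=
  DantzigFeas A t lam w ∧ ∀ w', DantzigFeas A t lam w' → l1 w ≤ l1 w'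

def stdNormalCDF (t : ℝ) : ℝ := (gaussianReal 0 1 (Set.Iic t)).toReal

def BigOP {Ωs : ℕ → Type*} [∀ k, MeasurableSpace (Ωs k)] (μ : ∀ k, Measure (Ωs k))
    (X : ∀ k, Ωs k → ℝ) (r : ℕ → ℝ) : Prop :=
  ∀ ε : ℝ, 0 < ε → ∃ C : ℝ, 0 < C ∧
    ∀ᶠ k in atTop, (μ k {ω | C * r k < |X k ω|}).toReal ≤ ε

def TendstoStdNormal {Ωs : ℕ → Type*} [∀ k, MeasurableSpace (Ωs k)] (μ : ∀ k, Measure (Ωs k))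
    (X : ∀ k, Ωs k → ℝ) : Prop :=
  ∀ t : ℝ, Tendsto (fun k => (μ k {ω | X k ω ≤ t}).toReal) atTop (𝓝 (stdNormalCDF t))

def omegaCol {p : ℕ} (S : Matrix (Fin p) (Fin p) ℝ) (j : Fin p) : Fin p → ℝ := fun i => S⁻¹ i j

def zstat {p n m : ℕ} (S : Matrix (Fin p) (Fin p) ℝ) (β : Fin p → ℝ) (j : Fin p)
    (ω : SampleSpace p n m) : ℝ :=
  omegaCol S j ⬝ᵥ (fun i => Shat β ω i - (S *ᵥ β) i)
    + omegaCol S j ⬝ᵥ ((S - SigTilde ω) *ᵥ β)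

def Vts {p : ℕ} (S : Matrix (Fin p) (Fin p) ℝ) (β : Fin p → ℝ) (σ : ℝ) (n m : ℕ)
    (j : Fin p) : ℝ :=
  S⁻¹ j j * gammaNN S β σ n m / n + (β j) ^ 2 / n + (β j) ^ 2 / m


lemma gaussianPDFReal_zero_neg (v : ℝ≥0) (x : ℝ) :
    gaussianPDFReal 0 v (-x) = gaussianPDFReal 0 v x := by
  simp only [gaussianPDFReal_def, sub_zero, neg_sq]

lemma gaussianPDFReal_zero_le_of_sq_le (v : ℝ≥0) {x y : ℝ} (h : x ^ 2 ≤ y ^ 2) :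
    gaussianPDFReal 0 v y ≤ gaussianPDFReal 0 v x := by
  simp only [gaussianPDFReal_def, sub_zero]
  gcongr

lemma gaussianPDFReal_zero_lt_of_sq_lt {v : ℝ≥0} (hv : v ≠ 0) {x y : ℝ} (h : x ^ 2 < y ^ 2) :
    gaussianPDFReal 0 v y < gaussianPDFReal 0 v x := by
  have hv' : (0 : ℝ) < v := by positivity
  simp only [gaussianPDFReal_def, sub_zero]
  gcongr

lemma continuous_gaussianPDFReal (μ : ℝ) (v : ℝ≥0) : Continuous (gaussianPDFReal μ v) := by
  unfold gaussianPDFReal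
  fun_prop

lemma stdNormalCDF_sub_stdNormalCDF (a b : ℝ) :
    stdNormalCDF b - stdNormalCDF a = ∫ x in a..b, gaussianPDFReal 0 1 x := by
  have hCDF (t : ℝ) : stdNormalCDF t = ∫ x in Set.Iic t, gaussianPDFReal 0 1 x := by
    rw [stdNormalCDF, gaussianReal_apply_eq_integral 0 one_ne_zero, ENNReal.toReal_ofReal]
    exact setIntegral_nonneg measurableSet_Iic fun x _ => gaussianPDFReal_nonneg 0 1 x
  rw [hCDF, hCDF]
  exact intervalIntegral.integral_Iic_sub_Iic (integrable_gaussianPDFReal 0 1).integrableOn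
    (integrable_gaussianPDFReal 0 1).integrableOn

def twoSidedPower (τ η : ℝ) : ℝ :=
  stdNormalCDF (|η| - τ) + stdNormalCDF (-|η| - τ)

lemma twoSidedPower_sub_eq (τ η η' : ℝ) :
    twoSidedPower τ η' - twoSidedPower τ η =
      (∫ t in (|η| - τ)..(|η'| - τ), gaussianPDFReal 0 1 t)
        - ∫ t in (|η| - τ)..(|η'| - τ), gaussianPDFReal 0 1 (t + 2 * τ) := by
  have hleft : stdNormalCDF (-|η| - τ) - stdNormalCDF (-|η'| - τ)
      = ∫ t in (|η| - τ)..(|η'| - τ), gaussianPDFReal 0 1 (t + 2 * τ) := by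
    rw [stdNormalCDF_sub_stdNormalCDF, intervalIntegral.integral_comp_add_right,
      show -|η'| - τ = -(|η'| - τ + 2 * τ) by ring, show -|η| - τ = -(|η| - τ + 2 * τ) by ring,
      ← intervalIntegral.integral_comp_neg]
    simp only [gaussianPDFReal_zero_neg]
  rw [← hleft, ← stdNormalCDF_sub_stdNormalCDF, twoSidedPower, twoSidedPower]
  ring

lemma twoSidedPower_le_of_abs_le {τ η η' : ℝ} (hτ : 0 ≤ τ) (h : |η| ≤ |η'|) :
    twoSidedPower τ η ≤ twoSidedPower τ η' := by
  have hcont := continuous_gaussianPDFReal 0 1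
  rw [← sub_nonneg, twoSidedPower_sub_eq, sub_nonneg]
  refine intervalIntegral.integral_mono_on (by linarith)
    ((hcont.comp (continuous_add_const _)).intervalIntegrable _ _)
    (hcont.intervalIntegrable _ _) fun t ht => ?_
  have ht : -τ ≤ t := by linarith [ht.1, abs_nonneg η]
  exact gaussianPDFReal_zero_le_of_sq_le 1 (by nlinarith)

lemma twoSidedPower_lt_of_abs_lt {τ η η' : ℝ} (hτ : 0 < τ) (h : |η| < |η'|) :
    twoSidedPower τ η < twoSidedPower τ η' := by
  have hcont := continuous_gaussianPDFReal 0 1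
  rw [← sub_pos, twoSidedPower_sub_eq, sub_pos]
  refine intervalIntegral.integral_lt_integral_of_continuousOn_of_le_of_exists_lt (by linarith)
    (hcont.comp (continuous_add_const _)).continuousOn hcont.continuousOn (fun t ht => ?_)
    ⟨|η'| - τ, ⟨by linarith, le_rfl⟩,
      gaussianPDFReal_zero_lt_of_sq_lt one_ne_zero (by nlinarith [abs_nonneg η])⟩
  have ht : -τ < t := by linarith [ht.1, abs_nonneg η]
  exact gaussianPDFReal_zero_le_of_sq_le 1 (by nlinarith)

lemma abs_div_sqrt_le_abs_div_sqrt (c : ℝ) {A D : ℝ} (hA : 0 < A) (h : A ≤ D) :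
    |c / √D| ≤ |c / √A| := by
  rw [abs_div, abs_div, abs_of_nonneg (sqrt_nonneg _), abs_of_nonneg (sqrt_nonneg _)]
  exact div_le_div_of_nonneg_left (abs_nonneg c) (sqrt_pos.2 hA) (sqrt_le_sqrt h)

lemma abs_div_sqrt_lt_abs_div_sqrt {c A D : ℝ} (hc : c ≠ 0) (hA : 0 < A) (h : A < D) :
    |c / √D| < |c / √A| := by
  rw [abs_div, abs_div, abs_of_nonneg (sqrt_nonneg _), abs_of_nonneg (sqrt_nonneg _)]
  exact div_lt_div_of_pos_left (abs_pos.2 hc) (sqrt_pos.2 hA) (sqrt_lt_sqrt hA.le h)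

theorem statement_18_general {p : ℕ} (S : Matrix (Fin p) (Fin p) ℝ) (hS : S.PosDef)
    (b : Fin p → ℝ) (σ : ℝ) (hσ : 0 < σ) (n m : ℕ) (hn : 0 < n)
    (j : Fin p) :
    |Real.sqrt n * b j /
        Real.sqrt ((S⁻¹ j j * (b ⬝ᵥ S *ᵥ b) + (b j) ^ 2) * (1 + (n : ℝ) / m)
          + S⁻¹ j j * σ ^ 2)|
      ≤ |Real.sqrt n * b j / Real.sqrt (S⁻¹ j j * σ ^ 2)| ∧
    (b j ≠ 0 →
      |Real.sqrt n * b j /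
          Real.sqrt ((S⁻¹ j j * (b ⬝ᵥ S *ᵥ b) + (b j) ^ 2) * (1 + (n : ℝ) / m)
            + S⁻¹ j j * σ ^ 2)|
        < |Real.sqrt n * b j / Real.sqrt (S⁻¹ j j * σ ^ 2)|) ∧
    ∀ τ : ℝ, 0 ≤ τ →
      (stdNormalCDF (|Real.sqrt n * b j /
            Real.sqrt ((S⁻¹ j j * (b ⬝ᵥ S *ᵥ b) + (b j) ^ 2) * (1 + (n : ℝ) / m)
              + S⁻¹ j j * σ ^ 2)| - τ)
          + stdNormalCDF (-|Real.sqrt n * b j /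
            Real.sqrt ((S⁻¹ j j * (b ⬝ᵥ S *ᵥ b) + (b j) ^ 2) * (1 + (n : ℝ) / m)
              + S⁻¹ j j * σ ^ 2)| - τ)
        ≤ stdNormalCDF (|Real.sqrt n * b j / Real.sqrt (S⁻¹ j j * σ ^ 2)| - τ)
          + stdNormalCDF (-|Real.sqrt n * b j / Real.sqrt (S⁻¹ j j * σ ^ 2)| - τ)) ∧
      (b j ≠ 0 → 0 < τ →
        stdNormalCDF (|Real.sqrt n * b j /
              Real.sqrt ((S⁻¹ j j * (b ⬝ᵥ S *ᵥ b) + (b j) ^ 2) * (1 + (n : ℝ) / m)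
                + S⁻¹ j j * σ ^ 2)| - τ)
            + stdNormalCDF (-|Real.sqrt n * b j /
              Real.sqrt ((S⁻¹ j j * (b ⬝ᵥ S *ᵥ b) + (b j) ^ 2) * (1 + (n : ℝ) / m)
                + S⁻¹ j j * σ ^ 2)| - τ)
          < stdNormalCDF (|Real.sqrt n * b j / Real.sqrt (S⁻¹ j j * σ ^ 2)| - τ)
            + stdNormalCDF (-|Real.sqrt n * b j / Real.sqrt (S⁻¹ j j * σ ^ 2)| - τ)) := by
  have hΩ : 0 < S⁻¹ j j := hS.inv.diag_pos
  have hq : 0 ≤ b ⬝ᵥ S *ᵥ b := by simpa using hS.posSemidef.dotProduct_mulVec_nonneg b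
  have hA : 0 < S⁻¹ j j * σ ^ 2 := by positivity
  have hgap : 0 ≤ (S⁻¹ j j * (b ⬝ᵥ S *ᵥ b) + b j ^ 2) * (1 + (n : ℝ) / m) := by positivity
  have hgap_pos (hb : b j ≠ 0) :
      0 < (S⁻¹ j j * (b ⬝ᵥ S *ᵥ b) + b j ^ 2) * (1 + (n : ℝ) / m) := by positivity
  have hle := abs_div_sqrt_le_abs_div_sqrt (√n * b j) hA (le_add_of_nonneg_left hgap)
  have hlt (hb : b j ≠ 0) := abs_div_sqrt_lt_abs_div_sqrt
    (mul_ne_zero (sqrt_pos.2 (Nat.cast_pos.2 hn)).ne' hb) hA (lt_add_of_pos_left _ (hgap_pos hb))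
  exact ⟨hle, hlt, fun τ hτ =>
    ⟨twoSidedPower_le_of_abs_le hτ hle, fun hb hτ' => twoSidedPower_lt_of_abs_lt hτ' (hlt hb)⟩⟩

/-- the two-sample noncentrality is never larger in magnitude than the
one-sample one (strictly when `b_j ≠ 0`), and consequently the two-sample power never
exceeds the one-sample power (strictly when `b_j ≠ 0` and `τ > 0`). -/
theorem statement_18 {p : ℕ} (S : Matrix (Fin p) (Fin p) ℝ) (hS : S.PosDef)
    (b : Fin p → ℝ) (σ : ℝ) (hσ : 0 < σ) (n m : ℕ) (hn : 0 < n) (hm : 0 < m)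
    (j : Fin p) :
    |Real.sqrt n * b j /
        Real.sqrt ((S⁻¹ j j * (b ⬝ᵥ S *ᵥ b) + (b j) ^ 2) * (1 + (n : ℝ) / m)
          + S⁻¹ j j * σ ^ 2)|
      ≤ |Real.sqrt n * b j / Real.sqrt (S⁻¹ j j * σ ^ 2)| ∧
    (b j ≠ 0 →
      |Real.sqrt n * b j /
          Real.sqrt ((S⁻¹ j j * (b ⬝ᵥ S *ᵥ b) + (b j) ^ 2) * (1 + (n : ℝ) / m)
            + S⁻¹ j j * σ ^ 2)|
        < |Real.sqrt n * b j / Real.sqrt (S⁻¹ j j * σ ^ 2)|) ∧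
    ∀ τ : ℝ, 0 ≤ τ →
      (stdNormalCDF (|Real.sqrt n * b j /
            Real.sqrt ((S⁻¹ j j * (b ⬝ᵥ S *ᵥ b) + (b j) ^ 2) * (1 + (n : ℝ) / m)
              + S⁻¹ j j * σ ^ 2)| - τ)
          + stdNormalCDF (-|Real.sqrt n * b j /
            Real.sqrt ((S⁻¹ j j * (b ⬝ᵥ S *ᵥ b) + (b j) ^ 2) * (1 + (n : ℝ) / m)
              + S⁻¹ j j * σ ^ 2)| - τ)
        ≤ stdNormalCDF (|Real.sqrt n * b j / Real.sqrt (S⁻¹ j j * σ ^ 2)| - τ)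
          + stdNormalCDF (-|Real.sqrt n * b j / Real.sqrt (S⁻¹ j j * σ ^ 2)| - τ)) ∧
      (b j ≠ 0 → 0 < τ →
        stdNormalCDF (|Real.sqrt n * b j /
              Real.sqrt ((S⁻¹ j j * (b ⬝ᵥ S *ᵥ b) + (b j) ^ 2) * (1 + (n : ℝ) / m)
                + S⁻¹ j j * σ ^ 2)| - τ)
            + stdNormalCDF (-|Real.sqrt n * b j /
              Real.sqrt ((S⁻¹ j j * (b ⬝ᵥ S *ᵥ b) + (b j) ^ 2) * (1 + (n : ℝ) / m)
                + S⁻¹ j j * σ ^ 2)| - τ)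
          < stdNormalCDF (|Real.sqrt n * b j / Real.sqrt (S⁻¹ j j * σ ^ 2)| - τ)
            + stdNormalCDF (-|Real.sqrt n * b j / Real.sqrt (S⁻¹ j j * σ ^ 2)| - τ)) :=
  statement_18_general S hS b σ hσ n m hn j

end ProxyData
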